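/- arXiv:2410.07184 — 2 statements merged into one kernel-verified Lean document; each statement's English description precedes it below -/
import Mathlib

section
/- For every positive integer n, r₀(n) = ∑_{d ∣ n} χ(d), where χ is the non-principal Dirichlet character modulo 4 (χ(d) = 1 if d ≡ 1 mod 4, χ(d) = −1 if d ≡ 3 mod 4, χ(d) = 0 if d is even). -/
/-- Number of representations of `n` as `a² + b²` with `a ≥ 0`, `b ≥ 1`. -/
noncomputable def r0 (n : ℕ) : ℕ :=
  Nat.card {p : ℕ × ℕ // 0 < p.2 ∧ p.1 ^ 2 + p.2 ^ 2 = n}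

/-- The non-principal Dirichlet character modulo 4. -/
def chi4 (d : ℕ) : ℤ :=
  if d % 4 = 1 then 1 else if d % 4 = 3 then -1 else 0

/-!
Count associate classes of Gaussian integers instead of lattice points: every nonzero class
has exactly one representative `a + b i` with `a ≥ 0`, `b ≥ 1`, so `r0 n` is the number of
classes of norm `n`. Unique factorisation in `ℤ[i]` makes this count multiplicative (a class
of norm `m n` with `m, n` coprime splits uniquely into classes of norms `m` and `n`), and at a
prime power it is read off from the splitting of `p`: `2 = -i (1 + i) ^ 2` ramifies (one class of
norm `2 ^ k`), `p ≡ 3` stays prime (one class if `k` is even, none otherwise), and `p ≡ 1`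
splits as `π π̄` with `π, π̄` non-associate (the `k + 1` classes `π ^ i π̄ ^ j`, `i + j = k`).
These are the values at `p ^ k` of the multiplicative function `n ↦ ∑_{d ∣ n} χ(d)`.
-/

lemma eq_pow_of_dvd_prime_pow {M : Type*} [CommMonoidWithZero M] [IsCancelMulZero M]
    [Subsingleton Mˣ] {p q : M} (hp : Prime p) {n : ℕ} (h : q ∣ p ^ n) : ∃ i ≤ n, q = p ^ i := by
  simpa only [associated_iff_eq] using (dvd_prime_pow hp n).1 h

lemma Prime.eq_of_pow_mul_pow_eq {M : Type*} [CommMonoidWithZero M] [IsCancelMulZero M]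
    {p q : M} (hp : Prime p) (hpq : ¬p ∣ q) {i j a b : ℕ} (h : p ^ i * q ^ j = p ^ a * q ^ b) :
    i = a := by
  have le {i j a b : ℕ} (h : p ^ i * q ^ j = p ^ a * q ^ b) : i ≤ a :=
    (pow_dvd_pow_iff hp.ne_zero hp.not_isUnit).1 <| hp.pow_dvd_of_dvd_mul_right i
      (fun hd => hpq (hp.dvd_of_dvd_pow hd)) (h ▸ dvd_mul_right _ _)
  exact le_antisymm (le h) (le h.symm)

lemma Nat.eq_of_dvd_sq_of_mul_eq {a b m n : ℕ} (hmn : m.Coprime n) (hn : n ≠ 0)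
    (ha : a ∣ m ^ 2) (hb : b ∣ n ^ 2) (h : a * b = m * n) : a = m := by
  have ha' : a ∣ m := (Nat.Coprime.coprime_dvd_left ha (hmn.pow_left 2)).dvd_of_dvd_mul_right
    (h ▸ dvd_mul_right a b)
  have hb' : b ∣ n := (Nat.Coprime.coprime_dvd_left hb (hmn.symm.pow_left 2)).dvd_of_dvd_mul_left
    (h ▸ dvd_mul_left b a)
  exact Nat.dvd_antisymm ha' <| Nat.dvd_of_mul_dvd_mul_right (Nat.pos_of_ne_zero hn) <|
    h ▸ mul_dvd_mul_left a hb'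

local notation "ℤ[i]" => GaussianInt

namespace GaussianInt

lemma isUnit_iff {u : ℤ[i]} :
    IsUnit u ↔ u = 1 ∨ u = -1 ∨ u = ⟨0, 1⟩ ∨ u = ⟨0, -1⟩ := by
  rw [← Zsqrtd.norm_eq_one_iff, ← Int.natCast_inj, abs_natCast_norm, Zsqrtd.norm_def]
  constructor
  · intro h
    replace h : u.re * u.re + u.im * u.im = 1 := by linear_combination h
    have hre : -1 ≤ u.re ∧ u.re ≤ 1 := by constructor <;> nlinarith [mul_self_nonneg u.im]
    have him : -1 ≤ u.im ∧ u.im ≤ 1 := by constructor <;> nlinarith [mul_self_nonneg u.re]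
    obtain ⟨a, b⟩ := u
    simp only [Zsqrtd.ext_iff] at hre him h ⊢
    obtain ⟨hre₁, hre₂⟩ := hre
    obtain ⟨him₁, him₂⟩ := him
    interval_cases a <;> interval_cases b <;> simp_all
  · rintro (rfl | rfl | rfl | rfl) <;> rfl

lemma exists_associated_quadrant {z : ℤ[i]} (hz : z ≠ 0) :
    ∃ w : ℤ[i], Associated z w ∧ 0 ≤ w.re ∧ 0 < w.im := by
  have hz' : z.re ≠ 0 ∨ z.im ≠ 0 := by
    by_contra! h; exact hz (Zsqrtd.ext h.1 h.2)
  have rotate (u : ℤ[i]) (hu : u = -1 ∨ u = ⟨0, 1⟩ ∨ u = ⟨0, -1⟩)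
      (h : 0 ≤ (z * u).re ∧ 0 < (z * u).im) : ∃ w : ℤ[i], Associated z w ∧ 0 ≤ w.re ∧ 0 < w.im :=
    ⟨z * u, associated_mul_unit_right _ _ (isUnit_iff.2 (.inr hu)), h⟩
  by_cases h1 : 0 ≤ z.re ∧ 0 < z.im
  · exact ⟨z, .refl z, h1⟩
  by_cases h2 : z.re < 0 ∧ 0 ≤ z.im
  · exact rotate ⟨0, -1⟩ (by simp) (by simp; omega)
  by_cases h3 : z.re ≤ 0 ∧ z.im < 0
  · exact rotate (-1) (by simp) (by simp; omega)
  · exact rotate ⟨0, 1⟩ (by simp) (by simp; omega)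

lemma eq_of_associated_of_quadrant {z w : ℤ[i]} (h : Associated z w)
    (hz : 0 ≤ z.re ∧ 0 < z.im) (hw : 0 ≤ w.re ∧ 0 < w.im) : z = w := by
  obtain ⟨u, rfl⟩ := h
  rcases isUnit_iff.1 u.isUnit with hu | hu | hu | hu <;>
    simp only [hu, mul_one] at hw ⊢ <;> simp at hw <;> omega

def assocNorm : Associates ℤ[i] →* ℕ where
  toFun := Quotient.lift (fun z : ℤ[i] => z.norm.natAbs) fun _ _ ⟨u, hu⟩ => by
    rw [← hu, Zsqrtd.norm_mul, Int.natAbs_mul, Zsqrtd.norm_eq_one_iff.2 u.isUnit, mul_one]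
  map_one' := rfl
  map_mul' := by
    rintro ⟨a⟩ ⟨b⟩
    exact (congrArg Int.natAbs (Zsqrtd.norm_mul a b)).trans (Int.natAbs_mul _ _)

@[simp]
lemma assocNorm_mk (z : ℤ[i]) : assocNorm (Associates.mk z) = z.norm.natAbs := rfl

lemma assocNorm_eq_one {x : Associates ℤ[i]} : assocNorm x = 1 ↔ x = 1 := by
  obtain ⟨z, rfl⟩ := Associates.mk_surjective x
  rw [assocNorm_mk, Zsqrtd.norm_eq_one_iff, Associates.mk_eq_one]

lemma assocNorm_mk_natCast (n : ℕ) : assocNorm (Associates.mk (n : ℤ[i])) = n ^ 2 := by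
  rw [assocNorm_mk, Zsqrtd.norm_natCast, Int.natAbs_mul, Int.natAbs_natCast, sq]

lemma dvd_mk_assocNorm (x : Associates ℤ[i]) : x ∣ Associates.mk (assocNorm x : ℤ[i]) := by
  obtain ⟨z, rfl⟩ := Associates.mk_surjective x
  rw [Associates.mk_dvd_mk, assocNorm_mk, natCast_natAbs_norm, Zsqrtd.norm_eq_mul_conj]
  exact dvd_mul_right z _

lemma isRelPrime_of_coprime_assocNorm {x y : Associates ℤ[i]}
    (h : (assocNorm x).Coprime (assocNorm y)) : IsRelPrime x y := fun d hx hy =>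
  (Associates.isUnit_iff_eq_one d).2 <| assocNorm_eq_one.1 <|
    Nat.Coprime.eq_one_of_dvd (Nat.Coprime.coprime_dvd_left (map_dvd _ hx) h) (map_dvd _ hy)

lemma prime_of_prime_assocNorm {x : Associates ℤ[i]} (h : (assocNorm x).Prime) : Prime x := by
  refine Irreducible.prime ⟨fun hx => h.ne_one ?_, fun a b hab => ?_⟩
  · rw [(Associates.isUnit_iff_eq_one x).1 hx, map_one]
  · rw [hab, map_mul, Nat.prime_mul_iff] at h
    simp only [Associates.isUnit_iff_eq_one, ← assocNorm_eq_one]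
    tauto

noncomputable def numAssociatesOfNorm (n : ℕ) : ℕ :=
  Nat.card {x : Associates ℤ[i] // assocNorm x = n}

lemma numAssociatesOfNorm_mul {m n : ℕ} (hm : m ≠ 0) (hn : n ≠ 0) (hmn : m.Coprime n) :
    numAssociatesOfNorm (m * n) = numAssociatesOfNorm m * numAssociatesOfNorm n := by
  rw [numAssociatesOfNorm, numAssociatesOfNorm, numAssociatesOfNorm, ← Nat.card_prod]
  refine (Nat.card_eq_of_bijective (fun xy => ⟨xy.1.1 * xy.2.1, by rw [map_mul, xy.1.2, xy.2.2]⟩)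
    ⟨?_, ?_⟩).symm
  · rintro ⟨⟨x, hx⟩, ⟨y, hy⟩⟩ ⟨⟨x', hx'⟩, ⟨y', hy'⟩⟩ h
    have h : x * y = x' * y' := congrArg Subtype.val h
    have dvd_of_mul_eq {a b c d : Associates ℤ[i]} (hcop : (assocNorm a).Coprime (assocNorm d))
        (h : a * b = c * d) : a ∣ c :=
      (isRelPrime_of_coprime_assocNorm hcop).dvd_of_dvd_mul_right (h ▸ dvd_mul_right a b)
    have h' : y * x = y' * x' := by rw [mul_comm, h, mul_comm]
    have hxx' : x = x' := dvd_antisymm (dvd_of_mul_eq (by rwa [hx, hy']) h)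
      (dvd_of_mul_eq (by rwa [hx', hy]) h.symm)
    have hyy' : y = y' := dvd_antisymm (dvd_of_mul_eq (by rw [hy, hx']; exact hmn.symm) h')
      (dvd_of_mul_eq (by rw [hy', hx]; exact hmn.symm) h'.symm)
    subst hxx' hyy'
    rfl
  · rintro ⟨z, hz⟩
    have hz' : z ∣ Associates.mk (m : ℤ[i]) * Associates.mk (n : ℤ[i]) := by
      simpa [hz, Associates.mk_mul_mk] using dvd_mk_assocNorm z
    obtain ⟨x, y, hx, hy, rfl⟩ := exists_dvd_and_dvd_of_dvd_mul hz'
    have hx := assocNorm_mk_natCast m ▸ map_dvd assocNorm hx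
    have hy := assocNorm_mk_natCast n ▸ map_dvd assocNorm hy
    rw [map_mul] at hz
    exact ⟨⟨⟨x, Nat.eq_of_dvd_sq_of_mul_eq hmn hn hx hy hz⟩,
      ⟨y, Nat.eq_of_dvd_sq_of_mul_eq hmn.symm hm hy hx (by rw [mul_comm, hz, mul_comm])⟩⟩, rfl⟩

lemma numAssociatesOfNorm_eq_one {n : ℕ} {c : Associates ℤ[i]} (hc : assocNorm c = n)
    (h : ∀ x, assocNorm x = n → x = c) : numAssociatesOfNorm n = 1 :=
  Nat.card_eq_one_iff_exists.2 ⟨⟨c, hc⟩, fun y => Subtype.ext (h y.1 y.2)⟩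

lemma numAssociatesOfNorm_one : numAssociatesOfNorm 1 = 1 :=
  numAssociatesOfNorm_eq_one (map_one _) fun _ => assocNorm_eq_one.1

lemma dvd_mk_pow_of_assocNorm_eq {x : Associates ℤ[i]} {p k : ℕ} (hx : assocNorm x = p ^ k) :
    x ∣ Associates.mk (p : ℤ[i]) ^ k := by
  simpa [hx, Associates.mk_pow] using dvd_mk_assocNorm x

lemma numAssociatesOfNorm_two_pow (k : ℕ) : numAssociatesOfNorm (2 ^ k) = 1 := by
  set π := Associates.mk (⟨1, 1⟩ : ℤ[i])
  have hπ : assocNorm π = 2 := rfl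
  -- `2 i = (1 + i) ^ 2`
  have hπ2 : Associates.mk (2 : ℤ[i]) = π ^ 2 := by
    rw [← Associates.mk_pow, Associates.mk_eq_mk_iff_associated]
    exact (associated_mul_unit_right 2 (⟨0, 1⟩ : ℤ[i]) (isUnit_iff.2 (by simp))).trans (by rfl)
  have hprime : Prime π := prime_of_prime_assocNorm (hπ ▸ Nat.prime_two)
  refine numAssociatesOfNorm_eq_one (c := π ^ k) (by rw [map_pow, hπ]) fun x hx => ?_
  have hdvd := dvd_mk_pow_of_assocNorm_eq hx
  rw [Nat.cast_ofNat, hπ2, ← pow_mul] at hdvd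
  obtain ⟨i, -, rfl⟩ := eq_pow_of_dvd_prime_pow hprime hdvd
  rw [map_pow, hπ] at hx
  rw [Nat.pow_right_injective le_rfl hx]

lemma numAssociatesOfNorm_prime_pow_of_mod_four_eq_three {p : ℕ} (hp : p.Prime)
    (hp3 : p % 4 = 3) (k : ℕ) : numAssociatesOfNorm (p ^ k) = if Even k then 1 else 0 := by
  have : Fact p.Prime := ⟨hp⟩
  have hprime : Prime (Associates.mk (p : ℤ[i])) :=
    Associates.prime_mk.2 (prime_of_nat_prime_of_mod_four_eq_three p hp3)
  have classify (x : Associates ℤ[i]) (hx : assocNorm x = p ^ k) :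
      ∃ j, k = j + j ∧ x = Associates.mk (p : ℤ[i]) ^ j := by
    obtain ⟨j, -, rfl⟩ := eq_pow_of_dvd_prime_pow hprime (dvd_mk_pow_of_assocNorm_eq hx)
    rw [map_pow, assocNorm_mk_natCast, ← pow_mul] at hx
    exact ⟨j, by rw [← Nat.pow_right_injective hp.two_le hx]; ring, rfl⟩
  split_ifs with hk
  · obtain ⟨j, rfl⟩ := hk
    refine numAssociatesOfNorm_eq_one (c := Associates.mk (p : ℤ[i]) ^ j)
      (by rw [map_pow, assocNorm_mk_natCast, ← pow_mul, two_mul]) fun x hx' => ?_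
    obtain ⟨j', hj', rfl⟩ := classify x hx'
    rw [show j' = j by omega]
  · refine Nat.card_eq_zero.2 (.inl ⟨fun ⟨x, hx⟩ => ?_⟩)
    obtain ⟨j, hj, -⟩ := classify x hx
    exact hk ⟨j, hj⟩

lemma exists_ne_mul_eq_of_mod_four_eq_one {p : ℕ} (hp : p.Prime) (hp1 : p % 4 = 1) :
    ∃ π π' : Associates ℤ[i], assocNorm π = p ∧ assocNorm π' = p ∧ π ≠ π' ∧
      π * π' = Associates.mk (p : ℤ[i]) := by
  have : Fact p.Prime := ⟨hp⟩
  obtain ⟨a, b, hab⟩ := Nat.Prime.sq_add_sq (by omega : p % 4 ≠ 3)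
  set z : ℤ[i] := ⟨a, b⟩
  have hz : z.norm = p := by simp [Zsqrtd.norm_def, z, ← hab]; ring
  refine ⟨Associates.mk z, Associates.mk (star z), by simp [hz], by simp [Zsqrtd.norm_conj, hz],
    ?_, by rw [Associates.mk_mul_mk, ← Zsqrtd.norm_eq_mul_conj, hz]; rfl⟩
  have not_sq (c : ℕ) (hc : c ^ 2 = p) : False := by
    rw [← hc, sq, Nat.prime_mul_iff] at hp
    exact Nat.not_prime_one (by rcases hp with ⟨h, rfl⟩ | ⟨h, rfl⟩ <;> exact h)
  rw [Ne, Associates.mk_eq_mk_iff_associated]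
  rintro ⟨u, hu⟩
  rcases isUnit_iff.1 u.isUnit with h | h | h | h <;>
    simp only [h, z, Zsqrtd.ext_iff] at hu <;> simp at hu
  · exact not_sq a (by simpa [hu] using hab)
  · exact not_sq b (by simpa [hu] using hab)
  · exact hp.ne_zero (by simp [← hab, hu])
  · obtain ⟨rfl, -⟩ := hu
    omega

lemma numAssociatesOfNorm_prime_pow_of_mod_four_eq_one {p : ℕ} (hp : p.Prime)
    (hp1 : p % 4 = 1) (k : ℕ) : numAssociatesOfNorm (p ^ k) = k + 1 := by
  obtain ⟨π, π', hπ, hπ', hne, hmul⟩ := exists_ne_mul_eq_of_mod_four_eq_one hp hp1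
  have hprime : Prime π := prime_of_prime_assocNorm (hπ ▸ hp)
  have hprime' : Prime π' := prime_of_prime_assocNorm (hπ' ▸ hp)
  have hndvd : ¬π ∣ π' := fun h =>
    hne (associated_iff_eq.1 ((hprime.dvd_prime_iff_associated hprime').1 h))
  have hnorm (i j : ℕ) : assocNorm (π ^ i * π' ^ j) = p ^ (i + j) := by
    rw [map_mul, map_pow, map_pow, hπ, hπ', pow_add]
  rw [← Finset.Nat.card_antidiagonal k, ← Nat.card_eq_finsetCard, numAssociatesOfNorm]
  refine (Nat.card_eq_of_bijective (fun ij => ⟨π ^ ij.1.1 * π' ^ ij.1.2,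
    by rw [hnorm, Finset.HasAntidiagonal.mem_antidiagonal.1 ij.2]⟩) ⟨?_, ?_⟩).symm
  · rintro ⟨⟨i, j⟩, hij⟩ ⟨⟨a, b⟩, hab⟩ h
    have hia : i = a := hprime.eq_of_pow_mul_pow_eq hndvd (congrArg Subtype.val h)
    rw [Finset.HasAntidiagonal.mem_antidiagonal] at hij hab
    obtain ⟨rfl, rfl⟩ : i = a ∧ j = b := ⟨hia, by omega⟩
    rfl
  · rintro ⟨x, hx⟩
    have hdvd := dvd_mk_pow_of_assocNorm_eq hx
    rw [← hmul, mul_pow] at hdvd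
    obtain ⟨y, w, hy, hw, rfl⟩ := exists_dvd_and_dvd_of_dvd_mul hdvd
    obtain ⟨i, -, rfl⟩ := eq_pow_of_dvd_prime_pow hprime hy
    obtain ⟨j, -, rfl⟩ := eq_pow_of_dvd_prime_pow hprime' hw
    rw [hnorm] at hx
    exact ⟨⟨(i, j), Finset.HasAntidiagonal.mem_antidiagonal.2
      (Nat.pow_right_injective hp.two_le hx)⟩, rfl⟩

lemma assocNorm_mk_natCast_pair (a b : ℕ) :
    assocNorm (Associates.mk (⟨a, b⟩ : ℤ[i])) = a ^ 2 + b ^ 2 := by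
  have h : (⟨a, b⟩ : ℤ[i]).norm = ((a ^ 2 + b ^ 2 : ℕ) : ℤ) := by
    rw [Zsqrtd.norm_def]
    push_cast
    ring
  rw [assocNorm_mk, h, Int.natAbs_natCast]

lemma r0_eq_numAssociatesOfNorm {n : ℕ} (hn : n ≠ 0) : r0 n = numAssociatesOfNorm n := by
  refine Nat.card_eq_of_bijective (fun p => ⟨Associates.mk ⟨p.1.1, p.1.2⟩,
    by rw [assocNorm_mk_natCast_pair, p.2.2]⟩) ⟨?_, ?_⟩
  · rintro ⟨⟨a, b⟩, hb, _⟩ ⟨⟨c, d⟩, hd, _⟩ hac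
    have h := eq_of_associated_of_quadrant (z := ⟨a, b⟩) (w := ⟨c, d⟩)
      (Associates.mk_eq_mk_iff_associated.1 (congrArg Subtype.val hac))
      ⟨Int.natCast_nonneg a, Int.natCast_pos.2 hb⟩ ⟨Int.natCast_nonneg c, Int.natCast_pos.2 hd⟩
    simp only [Zsqrtd.ext_iff, Nat.cast_inj] at h
    obtain ⟨rfl, rfl⟩ := h
    rfl
  · rintro ⟨x, hx⟩
    obtain ⟨z, rfl⟩ := Associates.mk_surjective x
    have hz : z ≠ 0 := by rintro rfl; exact hn hx.symm
    obtain ⟨⟨_, _⟩, hzw, hre, him⟩ := exists_associated_quadrant hz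
    obtain ⟨a, rfl⟩ := Int.eq_ofNat_of_zero_le hre
    obtain ⟨b, rfl⟩ := Int.eq_ofNat_of_zero_le him.le
    rw [Associates.mk_eq_mk_iff_associated.2 hzw, assocNorm_mk_natCast_pair] at hx
    exact ⟨⟨(a, b), Int.natCast_pos.1 him, hx⟩,
      Subtype.ext (Associates.mk_eq_mk_iff_associated.2 hzw).symm⟩

end GaussianInt

open ArithmeticFunction
open scoped ArithmeticFunction.zeta

lemma r0_zero : r0 0 = 0 :=
  Nat.card_eq_zero.2 (.inl ⟨fun ⟨p, hp, h⟩ => by have := pow_pos hp 2; omega⟩)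

noncomputable def r0Arith : ArithmeticFunction ℕ := ⟨r0, r0_zero⟩

lemma isMultiplicative_r0Arith : r0Arith.IsMultiplicative := by
  refine IsMultiplicative.iff_ne_zero.2 ⟨?_, fun {m n} hm hn hmn => ?_⟩
  · show r0 1 = 1
    rw [GaussianInt.r0_eq_numAssociatesOfNorm one_ne_zero, GaussianInt.numAssociatesOfNorm_one]
  · show r0 (m * n) = r0 m * r0 n
    rw [GaussianInt.r0_eq_numAssociatesOfNorm (mul_ne_zero hm hn),
      GaussianInt.r0_eq_numAssociatesOfNorm hm, GaussianInt.r0_eq_numAssociatesOfNorm hn,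
      GaussianInt.numAssociatesOfNorm_mul hm hn hmn]

lemma chi4_eq_χ₄ (d : ℕ) : chi4 d = ZMod.χ₄ d := by
  rw [ZMod.χ₄_nat_eq_if_mod_four, chi4]
  split_ifs <;> omega

def chi4Arith : ArithmeticFunction ℤ := ⟨chi4, rfl⟩

lemma isMultiplicative_chi4Arith : chi4Arith.IsMultiplicative :=
  IsMultiplicative.iff_ne_zero.2 ⟨by decide, fun {m n} _ _ _ => by
    show chi4 (m * n) = chi4 m * chi4 n
    simp only [chi4_eq_χ₄, Nat.cast_mul, map_mul]⟩

lemma r0_prime_pow_eq_sum_chi4 {p : ℕ} (hp : p.Prime) (k : ℕ) :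
    (r0 (p ^ k) : ℤ) = ∑ d ∈ (p ^ k).divisors, chi4 d := by
  have chi4_pow (i : ℕ) : chi4 (p ^ i) = chi4 p ^ i := by
    simp only [chi4_eq_χ₄, Nat.cast_pow, map_pow]
  rw [GaussianInt.r0_eq_numAssociatesOfNorm (pow_ne_zero k hp.ne_zero),
    Nat.sum_divisors_prime_pow hp]
  simp only [chi4_pow]
  rcases hp.eq_two_or_odd with rfl | hodd
  · rw [GaussianInt.numAssociatesOfNorm_two_pow]
    simp [chi4]
  obtain hp1 | hp3 : p % 4 = 1 ∨ p % 4 = 3 := by omega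
  · rw [GaussianInt.numAssociatesOfNorm_prime_pow_of_mod_four_eq_one hp hp1]
    simp [chi4, hp1]
  · rw [GaussianInt.numAssociatesOfNorm_prime_pow_of_mod_four_eq_three hp hp3]
    simp [chi4, hp3, neg_one_geom_sum, Nat.even_add_one, -Nat.not_even_iff_odd]

theorem r0_eq_sum_chi4_general (n : ℕ) :
    (r0 n : ℤ) = ∑ d ∈ n.divisors, chi4 d := by
  have h : (r0Arith : ArithmeticFunction ℤ) = ζ * chi4Arith := by
    refine (IsMultiplicative.eq_iff_eq_on_prime_powers _ isMultiplicative_r0Arith.natCast _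
      (isMultiplicative_zeta.natCast.mul isMultiplicative_chi4Arith)).2 fun p k hp => ?_
    rw [coe_zeta_mul_apply]
    exact_mod_cast r0_prime_pow_eq_sum_chi4 hp k
  calc (r0 n : ℤ) = (ζ * chi4Arith) n := by rw [← h, natCoe_apply]; rfl
    _ = ∑ d ∈ n.divisors, chi4 d := coe_zeta_mul_apply

theorem r0_eq_sum_chi4 (n : ℕ) (hn : 0 < n) :
    (r0 n : ℤ) = ∑ d ∈ n.divisors, chi4 d :=
  r0_eq_sum_chi4_general n
end

section
/- The function r₀* counting representations of n as a sum of two coprime squares is multiplicative: if gcd(m,n) = 1 then r₀*(mn) = r₀*(m)·r₀*(n). -/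
/-- Number of representations of `n` as a sum of two coprime squares `a² + b²`
with `a ≥ 0`, `b ≥ 1`, `gcd(a,b) = 1`. -/
noncomputable def r0star (n : ℕ) : ℕ :=
  Nat.card {p : ℕ × ℕ // 0 < p.2 ∧ p.1 ^ 2 + p.2 ^ 2 = n ∧ Nat.gcd p.1 p.2 = 1}

open Zsqrtd GaussianInt

local notation "ℤi" => GaussianInt

lemma norm_dvd_norm {a b : ℤi} (h : a ∣ b) : a.norm ∣ b.norm := by
  obtain ⟨c, rfl⟩ := h; rw [Zsqrtd.norm_mul]; exact Dvd.intro _ rfl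

lemma intCast_dvd_im {a : ℤ} {z : ℤi} (h : (a : ℤi) ∣ z) : a ∣ z.im := by
  obtain ⟨c, rfl⟩ := h; exact ⟨c.im, by simp⟩

lemma dvd_one_add_I (z : ℤi) (h : z.norm = 2) : z ∣ (⟨1,1⟩ : ℤi) := by
  obtain ⟨r, i⟩ := z
  have h' : r * r + i * i = 2 := by simpa [Zsqrtd.norm_def] using h
  have hr : -1 ≤ r ∧ r ≤ 1 := by constructor <;> nlinarith
  have hi : -1 ≤ i ∧ i ≤ 1 := by constructor <;> nlinarith
  obtain ⟨hr1, hr2⟩ := hr; obtain ⟨hi1, hi2⟩ := hi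
  interval_cases r <;> interval_cases i <;> first
    | omega
    | exact ⟨⟨1,0⟩, by decide⟩
    | exact ⟨⟨0,1⟩, by decide⟩
    | exact ⟨⟨0,-1⟩, by decide⟩
    | exact ⟨⟨-1,0⟩, by decide⟩

lemma star_dvd' {a b : ℤi} (h : a ∣ b) : star a ∣ star b := by
  obtain ⟨c, rfl⟩ := h; exact ⟨star c, by rw [star_mul']⟩

lemma stepA (n : ℕ) (s : ℤ) (hs : (n:ℤ) ∣ s^2 + 1) :
    (n:ℤ) ∣ (EuclideanDomain.gcd (n : ℤi) ⟨s, 1⟩).norm := by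
  set w : ℤi := ⟨s, 1⟩ with hw
  set d := EuclideanDomain.gcd (n : ℤi) w with hd
  have hnormw : w.norm = s^2 + 1 := by simp [Zsqrtd.norm_def, hw]; ring
  have hww : w * star w = ((s^2+1 : ℤ) : ℤi) := by
    rw [← Zsqrtd.norm_eq_mul_conj, hnormw]
  have hdvd : ((n:ℤ) : ℤi) ∣ w * star w := by
    rw [hww]; exact_mod_cast (Zsqrtd.intCast_dvd_intCast (d := -1) (n:ℤ) (s^2+1)).2 hs
  have hbez := EuclideanDomain.gcd_eq_gcd_ab (n : ℤi) w
  set A := EuclideanDomain.gcdA (n : ℤi) w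
  set B := EuclideanDomain.gcdB (n : ℤi) w
  have hstar : star d = (n : ℤi) * star A + star w * star B := by
    rw [hd, hbez]; simp only [star_add, star_mul, star_natCast]; ring
  have key : d * star d = ((n:ℤ) : ℤi) * (A * ((n:ℤi) * star A) + A * (star w * star B)
      + w * B * star A) + (w * star w) * (B * star B) := by
    rw [hstar, hd, hbez]; push_cast; ring
  have : ((n:ℤ) : ℤi) ∣ d * star d := by
    rw [key]; exact dvd_add (Dvd.intro _ rfl) (hdvd.mul_right _)
  rw [← Zsqrtd.norm_eq_mul_conj] at this
  exact (Zsqrtd.intCast_dvd_intCast _ _).1 this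

lemma s_odd_of_two_dvd {s : ℤ} (h : (2:ℤ) ∣ s^2 + 1) : ¬ (4:ℤ) ∣ s^2 + 1 := by
  rcases Int.even_or_odd s with ⟨k, hk⟩ | ⟨k, hk⟩
  · exfalso
    have : s^2 + 1 = 4*k^2 + 1 := by rw [hk]; ring
    rw [this] at h
    set K := k^2; omega
  · have : s^2 + 1 = 4*(k^2 + k) + 2 := by rw [hk]; ring
    rw [this]
    set K := k^2 + k; omega

lemma norm_gcd_eq (n : ℕ) (hn : 1 ≤ n) (s : ℤ) (hs : (n:ℤ) ∣ s^2 + 1) :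
    (EuclideanDomain.gcd (n : ℤi) ⟨s, 1⟩).norm = n := by
  set w : ℤi := ⟨s, 1⟩ with hw
  set d := EuclideanDomain.gcd (n : ℤi) w with hd
  have hdn : d ∣ (n:ℤi) := EuclideanDomain.gcd_dvd_left _ _
  have hdw : d ∣ w := EuclideanDomain.gcd_dvd_right _ _
  have hnormw : w.norm = s^2 + 1 := by simp [Zsqrtd.norm_def, hw]; ring
  have hnormn : ((n:ℕ) : ℤi).norm = (n:ℤ)^2 := by simp [Zsqrtd.norm_def]; ring
  have hA : (n:ℤ) ∣ d.norm := stepA n s hs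
  have hd0 : d ≠ 0 := by
    intro h
    rw [hd, EuclideanDomain.gcd_eq_zero_iff] at h
    have : w.im = 0 := by rw [h.2]; rfl
    simp [hw] at this
  -- u := gcd d (star d)
  set u := EuclideanDomain.gcd d (star d) with hu
  have hud : u ∣ d := EuclideanDomain.gcd_dvd_left _ _
  have hustar : u ∣ star d := EuclideanDomain.gcd_dvd_right _ _
  have huw : u ∣ w := hud.trans hdw
  have hustarw : u ∣ star w := hustar.trans (star_dvd' hdw)
  have hu2i : u ∣ (⟨0,2⟩ : ℤi) := by
    have h2 := dvd_sub huw hustarw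
    have : w - star w = (⟨0,2⟩ : ℤi) := by
      ext <;> simp [hw]
    rwa [this] at h2
  have hu0 : u ≠ 0 := by
    intro h
    rw [hu, EuclideanDomain.gcd_eq_zero_iff] at h
    exact hd0 h.1
  have hnormu4 : u.norm ∣ 4 := by
    have := norm_dvd_norm hu2i
    simpa [Zsqrtd.norm_def] using this
  have hnormuw : u.norm ∣ s^2 + 1 := hnormw ▸ norm_dvd_norm huw
  have hnormu_pos : 0 < u.norm := by
    rcases (Zsqrtd.norm_nonneg (by norm_num) u).lt_or_eq with h | h
    · exact h
    · exfalso; exact hu0 ((Zsqrtd.norm_eq_zero (by intro m; nlinarith [sq_nonneg m, sq_nonneg (m-1)]) u).1 h.symm)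
  -- u divides 1 + i
  have hu11 : u ∣ (⟨1,1⟩ : ℤi) := by
    have hle : u.norm ≤ 4 := Int.le_of_dvd (by norm_num) hnormu4
    interval_cases hnu : u.norm
    · exact ((Zsqrtd.norm_eq_one_iff' (by norm_num) u).mp hnu).dvd
    · exact dvd_one_add_I u hnu
    · exfalso; omega
    · exact absurd hnormuw (s_odd_of_two_dvd (dvd_trans (by norm_num) hnormuw))
  -- factor d = u * d1, star d = u * e1 with d1, e1 coprime
  obtain ⟨d1, hd1⟩ := hud
  obtain ⟨e1, he1⟩ := hustar
  have hbezu := EuclideanDomain.gcd_eq_gcd_ab d (star d)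
  rw [← hu] at hbezu
  set α := EuclideanDomain.gcdA d (star d) with hα
  set β := EuclideanDomain.gcdB d (star d) with hβ
  have h'' : u = u * (α * d1 + β * e1) := by
    calc u = d * α + star d * β := hbezu
    _ = u * (α * d1 + β * e1) := by rw [he1, hd1]; ring
  have hone : α * d1 + β * e1 = 1 := by
    apply mul_left_cancel₀ hu0
    rw [mul_one, ← h'']
  have hcop : IsCoprime d1 e1 := ⟨α, β, hone⟩
  have hd1d : d1 ∣ d := hd1 ▸ Dvd.intro_left u rfl
  have he1sd : e1 ∣ star d := he1 ▸ Dvd.intro_left u rfl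
  have hd1n : d1 ∣ ((n:ℕ) : ℤi) := hd1d.trans hdn
  have he1n : e1 ∣ ((n:ℕ) : ℤi) := by
    have := he1sd.trans (star_dvd' hdn)
    rwa [star_natCast] at this
  have hmul : d1 * e1 ∣ ((n:ℕ) : ℤi) := hcop.mul_dvd hd1n he1n
  have hdd2 : d * star d ∣ (⟨1,1⟩:ℤi)^2 * ((n:ℕ):ℤi) := by
    have h' : d * star d = u^2 * (d1 * e1) := by rw [he1, hd1]; ring
    rw [h']; exact mul_dvd_mul (pow_dvd_pow_of_dvd hu11 2) hmul
  have hnormdvd : d.norm^2 ∣ 4 * (n:ℤ)^2 := by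
    have h2 := norm_dvd_norm hdd2
    have e1' : (d * star d).norm = d.norm^2 := by
      rw [Zsqrtd.norm_mul, Zsqrtd.norm_conj]; ring
    have e2' : ((⟨1,1⟩:ℤi)^2 * ((n:ℕ):ℤi)).norm = 4 * (n:ℤ)^2 := by
      rw [Zsqrtd.norm_mul, sq, Zsqrtd.norm_mul, hnormn]
      norm_num [Zsqrtd.norm_def]
    rwa [e1', e2'] at h2
  obtain ⟨t, ht⟩ := hA
  have hnpos : (0:ℤ) < (n:ℤ) := by exact_mod_cast hn
  have hdnorm_pos : 0 < d.norm := by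
    rcases (Zsqrtd.norm_nonneg (by norm_num) d).lt_or_eq with h | h
    · exact h
    · exact absurd ((Zsqrtd.norm_eq_zero (by intro m; nlinarith [sq_nonneg m, sq_nonneg (m-1)]) d).1 h.symm) hd0
  have htpos : 0 < t := by nlinarith
  have ht2 : t^2 ∣ 4 := by
    have h' : (n:ℤ)^2 * t^2 ∣ (n:ℤ)^2 * 4 := by
      have : (n:ℤ)^2 * t^2 = d.norm^2 := by rw [ht]; ring
      rw [this, mul_comm]
      exact hnormdvd
    exact (mul_dvd_mul_iff_left (pow_ne_zero 2 hnpos.ne')).mp h'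
  have ht_le : t ≤ 2 := by nlinarith [Int.le_of_dvd (by norm_num) ht2]
  interval_cases t
  · rw [ht, mul_one]
  · exfalso
    have hndvd : d.norm ∣ (n:ℤ) * (n:ℤ) := by
      have := norm_dvd_norm hdn
      rw [hnormn] at this
      rwa [sq] at this
    have h2n : (2:ℤ) ∣ (n:ℤ) := by
      rw [ht] at hndvd
      exact (mul_dvd_mul_iff_left hnpos.ne').mp hndvd
    have h4 : (4:ℤ) ∣ s^2 + 1 := by
      have hnd : d.norm ∣ s^2+1 := hnormw ▸ norm_dvd_norm hdw
      obtain ⟨m, hm⟩ := h2n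
      exact dvd_trans ⟨m, by rw [ht, hm]; ring⟩ hnd
    exact s_odd_of_two_dvd (dvd_trans (by norm_num) h4) h4

lemma exists_primitive_rep (n : ℕ) (hn : 1 ≤ n) (s : ℤ) (hs : (n:ℤ) ∣ s^2 + 1) :
    ∃ a b : ℕ, 0 < b ∧ a^2 + b^2 = n ∧ Nat.gcd a b = 1 ∧ (n:ℤ) ∣ (a:ℤ) - s * b := by
  rcases eq_or_lt_of_le hn with h1 | hn2
  · refine ⟨0, 1, one_pos, by omega, by simp, ?_⟩
    rw [← h1]
    exact one_dvd _
  -- the key predicate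
  set P : ℤ → ℤ → Prop := fun a b =>
    a^2 + b^2 = (n:ℤ) ∧ (n:ℤ) ∣ s*b - a ∧ ∀ g:ℤ, g ∣ a → g ∣ b → IsUnit g with hP
  have rot : ∀ a b, P a b → P (-b) a := by
    rintro a b ⟨h1, h2, h3⟩
    refine ⟨by linarith [h1, sq_abs a]; , ?_, ?_⟩
    · have he : s*a - -b = s*(a - s*b) + (s^2+1)*b := by ring
      have h2' : (n:ℤ) ∣ a - s*b := by
        have := dvd_neg.mpr h2
        rwa [neg_sub] at this
      rw [he]
      exact dvd_add (h2'.mul_left s) (hs.mul_right b)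
    · intro g hg1 hg2
      exact h3 g hg2 (dvd_neg.mp hg1)
  have main : ∃ A B : ℤ, 0 < A ∧ 0 < B ∧ P A B := by
    have hN := norm_gcd_eq n hn s hs
    set w : ℤi := ⟨s, 1⟩ with hw
    set d := EuclideanDomain.gcd (n : ℤi) w with hd
    have hdw : d ∣ w := EuclideanDomain.gcd_dvd_right _ _
    have hdw2 := hdw
    have hdd' : d.re^2 + d.im^2 = (n:ℤ) := by
      rw [Zsqrtd.norm_def] at hN
      linear_combination hN
    obtain ⟨c, hc⟩ := hdw2
    have e1 : s = d.re * c.re - d.im * c.im := by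
      have hre := congrArg Zsqrtd.re hc
      rw [Zsqrtd.re_mul] at hre
      have : w.re = s := rfl
      rw [this] at hre
      linarith [hre]
    have e2 : (1:ℤ) = d.re * c.im + d.im * c.re := by
      have him := congrArg Zsqrtd.im hc
      rw [Zsqrtd.im_mul] at him
      have : w.im = 1 := rfl
      rw [this] at him
      linarith [him]
    have hcong : (n:ℤ) ∣ s * d.im - d.re :=
      ⟨-c.im, by linear_combination d.im*e1 - d.re*e2 - c.im*hdd'⟩
    have hcopint : ∀ g:ℤ, g ∣ d.re → g ∣ d.im → IsUnit g := by
      intro g hg1 hg2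
      obtain ⟨x, hx⟩ := hg1; obtain ⟨y, hy⟩ := hg2
      have hgd : (g : ℤi) ∣ d :=
        ⟨⟨x,y⟩, by ext <;> simp [Zsqrtd.re_mul, Zsqrtd.im_mul, hx, hy]⟩
      have him := intCast_dvd_im (hgd.trans hdw)
      have : w.im = 1 := rfl
      rw [this] at him
      exact isUnit_of_dvd_one him
    have hre0 : d.re ≠ 0 := by
      intro h0
      have hu := hcopint d.im (h0 ▸ dvd_zero d.im) dvd_rfl
      have : (n:ℤ) = 1 := by
        rcases Int.isUnit_iff.mp hu with h | h <;>
          · rw [← hdd', h0, h]; ring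
      have : n = 1 := by exact_mod_cast this
      omega
    have him0 : d.im ≠ 0 := by
      intro h0
      have hu := hcopint d.re dvd_rfl (h0 ▸ dvd_zero d.re)
      have : (n:ℤ) = 1 := by
        rcases Int.isUnit_iff.mp hu with h | h <;>
          · rw [← hdd', h0, h]; ring
      have : n = 1 := by exact_mod_cast this
      omega
    have hPd : P d.re d.im := ⟨hdd', hcong, hcopint⟩
    rcases hre0.lt_or_gt with hr | hr <;> rcases him0.lt_or_gt with hi | hi
    · exact ⟨-d.re, -d.im, by omega, by omega, rot _ _ (rot _ _ hPd)⟩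
    · have h3 := rot _ _ (rot _ _ (rot _ _ hPd))
      rw [neg_neg] at h3
      exact ⟨d.im, -d.re, hi, by omega, h3⟩
    · exact ⟨-d.im, d.re, by omega, hr, rot _ _ hPd⟩
    · exact ⟨d.re, d.im, hr, hi, hPd⟩
  obtain ⟨A, B, hA, hB, h1, h2, h3⟩ := main
  have hA' : ((A.toNat : ℕ) : ℤ) = A := Int.toNat_of_nonneg hA.le
  have hB' : ((B.toNat : ℕ) : ℤ) = B := Int.toNat_of_nonneg hB.le
  refine ⟨A.toNat, B.toNat, by omega, ?_, ?_, ?_⟩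
  · have : ((A.toNat:ℕ):ℤ)^2 + ((B.toNat:ℕ):ℤ)^2 = ((n:ℕ):ℤ) := by rw [hA', hB']; exact h1
    exact_mod_cast this
  · set g := Nat.gcd A.toNat B.toNat with hg
    have hgA : (g:ℤ) ∣ A := hA' ▸ Int.natCast_dvd_natCast.mpr (Nat.gcd_dvd_left _ _)
    have hgB : (g:ℤ) ∣ B := hB' ▸ Int.natCast_dvd_natCast.mpr (Nat.gcd_dvd_right _ _)
    have := h3 (g:ℤ) hgA hgB
    rcases Int.isUnit_iff.mp this with h | h
    · exact_mod_cast h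
    · omega
  · have : ((A.toNat:ℤ) - s * B.toNat) = -(s*B - A) := by rw [hA', hB']; ring
    rw [this]
    exact dvd_neg.mpr h2

lemma coprime_b {n a b : ℕ} (hab : a^2 + b^2 = n) (hg : Nat.gcd a b = 1) :
    Nat.Coprime b n := by
  have hcop : Nat.Coprime a b := hg
  have hgn : Nat.gcd b n ∣ a^2 := by
    have h1 : Nat.gcd b n ∣ n := Nat.gcd_dvd_right b n
    have h2 : Nat.gcd b n ∣ b^2 := (Nat.gcd_dvd_left b n).trans (dvd_pow_self b two_ne_zero)
    have : a^2 = n - b^2 := by omega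
    rw [this]
    exact Nat.dvd_sub h1 h2
  have hc2 : (Nat.gcd b n).Coprime (a^2) :=
    Nat.Coprime.pow_right 2 (Nat.Coprime.coprime_dvd_left (Nat.gcd_dvd_left b n) hcop.symm)
  exact hc2.eq_one_of_dvd hgn

lemma sq_eq_negone {n a b : ℕ} [NeZero n] (hab : a^2+b^2 = n) (hg : Nat.gcd a b = 1) :
    ((a : ZMod n) * (b : ZMod n)⁻¹)^2 = -1 := by
  have hb : IsUnit (b : ZMod n) := (ZMod.isUnit_iff_coprime b n).mpr (coprime_b hab hg)
  have h0 : (a : ZMod n)^2 + (b : ZMod n)^2 = 0 := by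
    have h' : ((a^2 + b^2 : ℕ) : ZMod n) = ((n:ℕ) : ZMod n) := by rw [hab]
    push_cast at h'
    simpa [ZMod.natCast_self] using h'
  have hbinv := ZMod.mul_inv_of_unit _ hb
  calc ((a:ZMod n) * (b:ZMod n)⁻¹)^2 = (a:ZMod n)^2 * ((b:ZMod n)⁻¹)^2 := by ring
   _ = (-((b:ZMod n)^2)) * ((b:ZMod n)⁻¹)^2 := by rw [eq_neg_of_add_eq_zero_left h0]
   _ = -(((b:ZMod n)*(b:ZMod n)⁻¹)^2) := by ring
   _ = -1 := by rw [hbinv]; ring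

lemma card_rep_eq_card_roots (n : ℕ) (hn : 0 < n) :
    Nat.card {p : ℕ × ℕ // 0 < p.2 ∧ p.1 ^ 2 + p.2 ^ 2 = n ∧ Nat.gcd p.1 p.2 = 1}
      = Nat.card {s : ZMod n // s ^ 2 = -1} := by
  haveI : NeZero n := ⟨hn.ne'⟩
  apply Nat.card_congr
  refine Equiv.ofBijective
    (fun p => ⟨(p.1.1 : ZMod n) * ((p.1.2 : ZMod n))⁻¹, sq_eq_negone p.2.2.1 p.2.2.2⟩) ⟨?_, ?_⟩
  · -- injective
    rintro ⟨⟨a, b⟩, hb, h1, hg⟩ ⟨⟨a', b'⟩, hb', h2, hg'⟩ heq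
    simp only [Subtype.mk.injEq] at heq
    have hub : IsUnit (b : ZMod n) := (ZMod.isUnit_iff_coprime b n).mpr (coprime_b h1 hg)
    have hub' : IsUnit (b' : ZMod n) := (ZMod.isUnit_iff_coprime b' n).mpr (coprime_b h2 hg')
    have hmul : ((a * b' : ℕ) : ZMod n) = ((a' * b : ℕ) : ZMod n) := by
      push_cast
      have hcongr := congrArg (· * ((b:ZMod n) * (b':ZMod n))) heq
      calc (a:ZMod n) * b' = (a:ZMod n) * b' * ((b:ZMod n)⁻¹ * b) := by
            rw [ZMod.inv_mul_of_unit _ hub, mul_one]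
        _ = (a:ZMod n) * (b:ZMod n)⁻¹ * ((b:ZMod n) * (b':ZMod n)) := by ring
        _ = (a':ZMod n) * (b':ZMod n)⁻¹ * ((b:ZMod n) * (b':ZMod n)) := hcongr
        _ = (a':ZMod n) * b * ((b':ZMod n)⁻¹ * b') := by ring
        _ = (a':ZMod n) * b := by rw [ZMod.inv_mul_of_unit _ hub', mul_one]
    have hdvd : (n:ℤ) ∣ ((a':ℤ)*b - (a:ℤ)*b') := by
      have := ((ZMod.natCast_eq_natCast_iff _ _ _).mp hmul).dvd
      push_cast at this ⊢
      exact this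
    have c1 : (a:ℤ)^2+(b:ℤ)^2 = (n:ℤ) := by exact_mod_cast h1
    have c2 : (a':ℤ)^2+(b':ℤ)^2 = (n:ℤ) := by exact_mod_cast h2
    have hZ : ((a:ℤ)*b' - (a':ℤ)*b)^2 + ((a:ℤ)*a' + (b:ℤ)*b')^2 = (n:ℤ)^2 := by
      linear_combination ((a:ℤ)^2+(b:ℤ)^2) * c2 + (n:ℤ) * c1
    have hpos : 0 < (a:ℤ)*a' + (b:ℤ)*b' := by
      have h3 : 0 < (b:ℤ)*b' := by
        have : (0:ℤ) < b := by exact_mod_cast hb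
        have : (0:ℤ) < b' := by exact_mod_cast hb'
        positivity
      have h4 : 0 ≤ (a:ℤ)*a' := by positivity
      linarith
    have hX : (a:ℤ)*b' - (a':ℤ)*b = 0 := by
      rcases eq_or_ne ((a:ℤ)*b' - (a':ℤ)*b) 0 with h | h
      · exact h
      · exfalso
        have hlt : ((a:ℤ)*b' - (a':ℤ)*b)^2 < (n:ℤ)^2 := by nlinarith
        have habs : |(a:ℤ)*b' - (a':ℤ)*b| < (n:ℤ) :=
          abs_lt_of_sq_lt_sq hlt (by positivity)
        have h7 : (n:ℤ) ∣ (a:ℤ)*b' - (a':ℤ)*b := by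
          rw [show (a:ℤ)*b' - (a':ℤ)*b = -((a':ℤ)*b - (a:ℤ)*b') by ring]
          exact dvd_neg.mpr hdvd
        exact h (Int.eq_zero_of_abs_lt_dvd h7 habs)
    have hab2 : a * b' = a' * b := by exact_mod_cast sub_eq_zero.mp hX
    have hbb : b = b' := by
      have hco : Nat.Coprime b a := Nat.coprime_comm.mp hg
      have h5 : b ∣ b' := hco.dvd_of_dvd_mul_left ⟨a', by rw [hab2, mul_comm]⟩
      have hco' : Nat.Coprime b' a' := Nat.coprime_comm.mp hg'
      have h6 : b' ∣ b := hco'.dvd_of_dvd_mul_left ⟨a, by rw [← hab2, mul_comm]⟩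
      exact Nat.dvd_antisymm h5 h6
    subst hbb
    have haa : a = a' := Nat.eq_of_mul_eq_mul_right hb hab2
    subst haa
    rfl
  · -- surjective
    rintro ⟨σ, hσ⟩
    have hval : ((σ.val : ℕ) : ZMod n) = σ := ZMod.natCast_rightInverse σ
    have hdiv : (n:ℤ) ∣ (σ.val:ℤ)^2 + 1 := by
      have h' : ((σ.val^2 + 1 : ℕ) : ZMod n) = 0 := by
        push_cast [hval]
        rw [hσ]; ring
      have := (ZMod.natCast_eq_zero_iff _ _).mp h'
      exact_mod_cast Int.natCast_dvd_natCast.mpr this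
    obtain ⟨a, b, hb, hab, hg, hcong⟩ := exists_primitive_rep n hn σ.val hdiv
    refine ⟨⟨(a,b), hb, hab, hg⟩, ?_⟩
    apply Subtype.ext
    show (a : ZMod n) * ((b : ZMod n))⁻¹ = σ
    have hub : IsUnit (b : ZMod n) := (ZMod.isUnit_iff_coprime b n).mpr (coprime_b hab hg)
    have ha : (a : ZMod n) = σ * b := by
      have h0 : (((a:ℤ) - (σ.val:ℤ) * b : ℤ) : ZMod n) = 0 :=
        (ZMod.intCast_zmod_eq_zero_iff_dvd _ _).mpr hcong
      push_cast [hval] at h0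
      linear_combination h0
    rw [ha, mul_assoc, ZMod.mul_inv_of_unit _ hub, mul_one]

lemma roots_mult (m n : ℕ) (h : Nat.Coprime m n) :
    Nat.card {s : ZMod (m*n) // s^2 = -1}
      = Nat.card {s : ZMod m // s^2 = -1} * Nat.card {s : ZMod n // s^2 = -1} := by
  rw [← Nat.card_prod]
  apply Nat.card_congr
  refine (Equiv.subtypeEquiv (p := fun s : ZMod (m*n) => s^2 = -1)
      (q := fun x : ZMod m × ZMod n => x^2 = -1) (ZMod.chineseRemainder h).toEquiv ?_).trans
    ((Equiv.subtypeEquivRight (p := fun x : ZMod m × ZMod n => x^2 = -1)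
      (q := fun x : ZMod m × ZMod n => x.1^2 = -1 ∧ x.2^2 = -1) ?_).trans
      (Equiv.subtypeProdEquivProd (p := fun a : ZMod m => a^2 = -1) (q := fun b : ZMod n => b^2 = -1)))
  · intro s
    set e := ZMod.chineseRemainder h
    constructor
    · intro hs
      show (e s)^2 = -1
      rw [← map_pow, hs, map_neg, map_one]
    · intro hs
      apply e.injective
      rw [map_pow, map_neg, map_one]
      exact hs
  · intro x
    constructor
    · intro hx
      constructor
      · have := congrArg Prod.fst hx; simpa using this
      · have := congrArg Prod.snd hx; simpa using this
    · rintro ⟨h1, h2⟩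
      have : x^2 = (x.1^2, x.2^2) := rfl
      rw [this, h1, h2]
      rfl

lemma r0star_one : r0star 1 = 1 := by
  unfold r0star
  rw [card_rep_eq_card_roots 1 one_pos, Nat.card_eq_one_iff_unique]
  refine ⟨?_, ⟨⟨0, Subsingleton.elim _ _⟩⟩⟩
  infer_instance

theorem r0star_multiplicative (m n : ℕ) (h : Nat.gcd m n = 1) :
    r0star (m * n) = r0star m * r0star n := by
  rcases Nat.eq_zero_or_pos m with rfl | hm
  · have hn : n = 1 := by simpa using h
    subst hn
    simp [r0star_one]
  rcases Nat.eq_zero_or_pos n with rfl | hn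
  · have hm1 : m = 1 := by simpa using h
    subst hm1
    simp [r0star_one]
  · unfold r0star
    rw [card_rep_eq_card_roots _ (Nat.mul_pos hm hn), card_rep_eq_card_roots _ hm,
      card_rep_eq_card_roots _ hn]
    exact roots_mult m n h
end
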